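/- Let X be a compact Hausdorff space of weight κ which is a continuous image of A(μ)^τ for some infinite cardinal μ and some cardinal τ. Then X is a continuous image of A(μ)^κ. -/

import Mathlib

open Cardinal Set Function

universe u

noncomputable section

/-- The density of a topological space: least cardinality of a dense subset. -/
def tdensity (X : Type u) [TopologicalSpace X] : Cardinal.{u} :=
  sInf {c : Cardinal.{u} | ∃ s : Set X, Dense s ∧ #s = c}

/-- The weight of a topological space: least cardinality of a base. -/
def tweight (X : Type u) [TopologicalSpace X] : Cardinal.{u} :=
  sInf {c : Cardinal.{u} | ∃ B : Set (Set X), TopologicalSpace.IsTopologicalBasis B ∧ #B = c}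

/-- The π-weight: least cardinality of a π-base. -/
def piWeight (X : Type u) [TopologicalSpace X] : Cardinal.{u} :=
  sInf {c : Cardinal.{u} | ∃ B : Set (Set X),
    (∀ U ∈ B, IsOpen U ∧ U.Nonempty) ∧
    (∀ V : Set X, IsOpen V → V.Nonempty → ∃ U ∈ B, U ⊆ V) ∧ #B = c}

/-- ĉ(X): the least cardinal κ such that X has no pairwise disjoint family of κ
nonempty open sets. -/
def hatCell (X : Type u) [TopologicalSpace X] : Cardinal.{u} :=
  sInf {c : Cardinal.{u} | ¬ ∃ 𝒰 : Set (Set X),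
    (∀ U ∈ 𝒰, IsOpen U ∧ U.Nonempty) ∧ 𝒰.PairwiseDisjoint id ∧ #𝒰 = c}

/-- `H` is a closed G_λ set: closed and the intersection of at most λ open sets. -/
def IsClosedGLambda (lam : Cardinal.{u}) {X : Type u} [TopologicalSpace X] (H : Set X) : Prop :=
  IsClosed H ∧ ∃ 𝒰 : Set (Set X), (∀ U ∈ 𝒰, IsOpen U) ∧ #𝒰 ≤ lam ∧ H = ⋂₀ 𝒰

/-- X ∈ Γ(λ): every closed G_λ set has density ≤ λ. -/
def InGamma (lam : Cardinal.{u}) (X : Type u) [TopologicalSpace X] : Prop :=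
  ∀ H : Set X, IsClosedGLambda lam H → tdensity ↥H ≤ lam

/-- `S` witnesses `X ∈ Δ(λ)`. -/
def DeltaWitness (lam : Cardinal.{u}) (X : Type u) [TopologicalSpace X] (S : Set X) : Prop :=
  Dense S ∧
  (∀ T : Set X, T ⊆ S → #T < lam → tweight ↥(closure T) < lam) ∧
  (∀ (Y : Type u) (_ : TopologicalSpace Y), T2Space Y → ∀ f : X → Y,
     Continuous f → Surjective f → tweight Y = lam → #(f '' S) = lam)

/-- X ∈ Δ(λ). -/
def InDelta (lam : Cardinal.{u}) (X : Type u) [TopologicalSpace X] : Prop :=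
  lam ≤ tweight X ∧ ∃ S : Set X, DeltaWitness lam X S

/-- A canonical discrete space of cardinality `c`. -/
instance (c : Cardinal.{u}) : TopologicalSpace c.out := ⊥

instance (c : Cardinal.{u}) : DiscreteTopology c.out := ⟨rfl⟩

/-- A(μ): one-point compactification of a discrete space of cardinality μ. -/
def ACompact (μ : Cardinal.{u}) : Type u := OnePoint μ.out

instance (μ : Cardinal.{u}) : TopologicalSpace (ACompact μ) :=
  inferInstanceAs (TopologicalSpace (OnePoint μ.out))

/-- A(μ)^κ. -/
def APow (μ κ : Cardinal.{u}) : Type u := κ.out → ACompact μ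

instance (μ κ : Cardinal.{u}) : TopologicalSpace (APow μ κ) :=
  inferInstanceAs (TopologicalSpace (κ.out → ACompact μ))

/-- The set of finite-support points of A(μ)^κ. -/
def finSupport (μ κ : Cardinal.{u}) : Set (APow μ κ) :=
  {x | {ξ | x ξ ≠ (OnePoint.infty : OnePoint μ.out)}.Finite}

/-- X is polyadic: a continuous image of some A(μ)^κ. -/
def IsPolyadic (X : Type u) [TopologicalSpace X] : Prop :=
  ∃ μ κ : Cardinal.{u}, ℵ₀ ≤ μ ∧ ∃ f : APow μ κ → X, Continuous f ∧ Surjective f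

/-!
Take a base `B` of `X` with `#B = w(X)` and a continuous surjection `f : A(μ)^τ → X`. For basic
`U`, `V` with disjoint closures, the compact set `f⁻¹(cl U)` lies in the open set `f⁻¹(X ∖ cl V)`,
so a finite set of coordinates already witnesses this. Any two points of the compact Hausdorff
space `X` are separated by such a pair, hence `f` depends only on a set `J` of at most
`max w(X) ℵ₀` coordinates and `X` is a continuous image of `A(μ)^J`, which for infinite `w(X)` is
in turn an image of `A(μ)^w(X)`. If `w(X)` is finite, `X` is finite and is already an image of a
single factor `A(μ)`.
-/

open Cardinal Set Function TopologicalSpace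

instance (μ : Cardinal.{u}) : Nonempty (ACompact μ) := ⟨OnePoint.infty⟩

instance (μ : Cardinal.{u}) : CompactSpace (ACompact μ) :=
  inferInstanceAs (CompactSpace (OnePoint μ.out))

lemma exists_isTopologicalBasis_mk_eq_tweight (X : Type u) [TopologicalSpace X] :
    ∃ B : Set (Set X), IsTopologicalBasis B ∧ #B = tweight X :=
  csInf_mem (s := {c | ∃ B : Set (Set X), IsTopologicalBasis B ∧ #B = c})
    ⟨_, {U : Set X | IsOpen U}, isTopologicalBasis_opens, rfl⟩

lemma tweight_ne_zero (X : Type u) [TopologicalSpace X] [Nonempty X] : tweight X ≠ 0 := by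
  obtain ⟨B, hB, hBX⟩ := exists_isTopologicalBasis_mk_eq_tweight X
  obtain ⟨x⟩ := ‹Nonempty X›
  obtain ⟨U, hU, -⟩ := hB.mem_nhds_iff.mp (Filter.univ_mem (f := nhds x))
  rw [← hBX, mk_ne_zero_iff]
  exact ⟨⟨U, hU⟩⟩

lemma finite_of_tweight_lt_aleph0 {X : Type u} [TopologicalSpace X] [T0Space X]
    (h : tweight X < ℵ₀) : Finite X := by
  obtain ⟨B, hB, hBX⟩ := exists_isTopologicalBasis_mk_eq_tweight X
  have : Finite B := lt_aleph0_iff_finite.mp (hBX ▸ h)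
  exact Finite.of_injective (fun x : X => {U : B | x ∈ U.1}) fun x y hxy =>
    hB.eq_iff.mpr fun U hU => Set.ext_iff.mp hxy ⟨U, hU⟩

lemma OnePoint.exists_continuous_surjective_of_embedding {α X : Type*} [TopologicalSpace α]
    [DiscreteTopology α] [TopologicalSpace X] [Finite X] [Nonempty X] (e : X ↪ α) :
    ∃ q : OnePoint α → X, Continuous q ∧ Surjective q := by
  obtain ⟨x₀⟩ := ‹Nonempty X›
  let s : α → X := extend e id fun _ => x₀
  refine ⟨fun z => z.elim x₀ s, ?_, fun x =>
    ⟨e x, show s (e x) = x from e.injective.extend_apply id _ x⟩⟩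
  rw [OnePoint.continuous_iff_from_discrete]
  -- `s` takes the value `x₀` off the finite set `range e`
  refine (Filter.tendsto_pure.mpr ?_).mono_right (pure_le_nhds x₀)
  refine (Set.finite_range e).subset fun m hm => ?_
  by_contra hme
  exact hm (show s m = x₀ from extend_apply' id _ m fun ⟨x, hx⟩ => hme ⟨x, hx⟩)

lemma exists_continuous_surjective_APow_of_finite {X : Type u} [TopologicalSpace X] [Finite X]
    [Nonempty X] {μ κ : Cardinal.{u}} (hXμ : #X ≤ μ) (hκ : κ ≠ 0) :
    ∃ g : APow μ κ → X, Continuous g ∧ Surjective g := by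
  obtain ⟨e⟩ : Nonempty (X ↪ μ.out) := by rwa [← le_def, mk_out]
  obtain ⟨q, hq, hqs⟩ := OnePoint.exists_continuous_surjective_of_embedding e
  obtain ⟨ξ⟩ : Nonempty κ.out := by rwa [← mk_ne_zero_iff, mk_out]
  exact ⟨fun x => q (x ξ), hq.comp (continuous_apply ξ), hqs.comp (surjective_eval ξ)⟩

lemma IsCompact.exists_finset_of_subset_isOpen_pi {ι : Type*} {Z : ι → Type*}
    [∀ i, TopologicalSpace (Z i)] {K W : Set (∀ i, Z i)} (hK : IsCompact K) (hW : IsOpen W)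
    (hKW : K ⊆ W) : ∃ I : Finset ι, ∀ z ∈ K, ∀ z', (∀ i ∈ I, z i = z' i) → z' ∈ W := by
  classical
  have hbox : ∀ x : K, ∃ (I : Finset ι) (u : ∀ i, Set (Z i)),
      (∀ i ∈ I, IsOpen (u i) ∧ x.1 i ∈ u i) ∧ (I : Set ι).pi u ⊆ W :=
    fun x => isOpen_pi_iff.mp hW x (hKW x.2)
  choose I u hu hsub using hbox
  obtain ⟨t, ht⟩ := hK.elim_finite_subcover (fun x : K => ((I x : Set ι)).pi (u x))
    (fun x => isOpen_set_pi (I x).finite_toSet fun i hi => (hu x i hi).1)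
    fun z hz => mem_iUnion.mpr ⟨⟨z, hz⟩, fun i hi => (hu ⟨z, hz⟩ i hi).2⟩
  refine ⟨t.biUnion I, fun z hz z' hzz' => ?_⟩
  obtain ⟨x, hxt, hzx⟩ := mem_iUnion₂.mp (ht hz)
  exact hsub x fun i hi => hzz' i (Finset.mem_biUnion.mpr ⟨x, hxt, hi⟩) ▸ hzx i hi

lemma TopologicalSpace.IsTopologicalBasis.exists_disjoint_closure {X : Type*}
    [TopologicalSpace X] [T25Space X] {B : Set (Set X)} (hB : IsTopologicalBasis B) {a b : X}
    (hab : a ≠ b) : ∃ U ∈ B, ∃ V ∈ B, a ∈ U ∧ b ∈ V ∧ Disjoint (closure U) (closure V) := by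
  obtain ⟨s, hs, t, ht, hst⟩ := Filter.disjoint_iff.mp (T25Space.t2_5 hab)
  rw [Filter.mem_lift'_sets (monotone_closure X)] at hs ht
  obtain ⟨s', hs', hss'⟩ := hs
  obtain ⟨t', ht', htt'⟩ := ht
  obtain ⟨U, hU, haU, hUs'⟩ := hB.mem_nhds_iff.mp hs'
  obtain ⟨V, hV, hbV, hVt'⟩ := hB.mem_nhds_iff.mp ht'
  exact ⟨U, hU, V, hV, haU, hbV,
    hst.mono ((closure_mono hUs').trans hss') ((closure_mono hVt').trans htt')⟩

lemma Continuous.exists_dependsOn_mk_le {ι X : Type u} {Z : ι → Type*}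
    [∀ i, TopologicalSpace (Z i)] [∀ i, CompactSpace (Z i)] [TopologicalSpace X] [T25Space X]
    {f : (∀ i, Z i) → X} (hf : Continuous f) {B : Set (Set X)} (hB : IsTopologicalBasis B) :
    ∃ J : Set ι, #J ≤ max #B ℵ₀ ∧ DependsOn f J := by
  let P := {p : B × B | Disjoint (closure p.1.1) (closure p.2.1)}
  have hsep : ∀ p : P, ∃ I : Finset ι, ∀ z ∈ f ⁻¹' closure p.1.1.1, ∀ z',
      (∀ i ∈ I, z i = z' i) → z' ∈ f ⁻¹' (closure p.1.2.1)ᶜ := fun p =>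
    (isClosed_closure.preimage hf).isCompact.exists_finset_of_subset_isOpen_pi
      (isClosed_closure.preimage hf).isOpen_compl fun _ hz => Set.disjoint_left.mp p.2 hz
  choose I hI using hsep
  refine ⟨⋃ p, (I p : Set ι), ?_, fun z z' hzz' => ?_⟩
  · have hP : #P ≤ max #B ℵ₀ := by
      calc #P ≤ #(B × B) := mk_set_le _
        _ ≤ max #B ℵ₀ := by simpa only [mk_prod, lift_id, max_self] using mul_le_max #B #B
    calc #(⋃ p, (I p : Set ι)) ≤ #P * ⨆ p, #(I p : Set ι) := mk_iUnion_le _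
      _ ≤ max #B ℵ₀ * ℵ₀ :=
        mul_le_mul' hP (ciSup_le' fun p => (I p).finite_toSet.lt_aleph0.le)
      _ ≤ max #B ℵ₀ := by simpa only [max_assoc, max_self] using mul_le_max (max #B ℵ₀) ℵ₀
  · by_contra hne
    obtain ⟨U, hU, V, hV, hzU, hzV, hUV⟩ := hB.exists_disjoint_closure hne
    exact hI ⟨(⟨U, hU⟩, ⟨V, hV⟩), hUV⟩ z (subset_closure hzU) z'
      (fun i hi => hzz' i (mem_iUnion.mpr ⟨_, hi⟩)) (subset_closure hzV)

lemma DependsOn.exists_continuous_surjective {ι X : Type*} {Z : ι → Type*}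
    [∀ i, TopologicalSpace (Z i)] [∀ i, Nonempty (Z i)] [TopologicalSpace X]
    {f : (∀ i, Z i) → X} {J : Set ι} (hJ : DependsOn f J) (hf : Continuous f)
    (hsurj : Surjective f) : ∃ g : (∀ j : J, Z j) → X, Continuous g ∧ Surjective g := by
  classical
  let extendDefault : (∀ j : J, Z j) → ∀ i, Z i := fun y i =>
    if h : i ∈ J then y ⟨i, h⟩ else Classical.arbitrary _
  have hext : Continuous extendDefault := continuous_pi fun i => by
    by_cases h : i ∈ J
    · simpa only [extendDefault, h, dite_true] using continuous_apply (⟨i, h⟩ : J)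
    · simpa only [extendDefault, h, dite_false] using continuous_const
  refine ⟨f ∘ extendDefault, hf.comp hext, fun x => ?_⟩
  obtain ⟨z, rfl⟩ := hsurj x
  exact ⟨J.domRestrict z, hJ fun i hi => by simp [extendDefault, hi, Set.domRestrict]⟩

/-- a μ-adic space of weight κ is a continuous image of A(μ)^κ. -/
theorem statement15 {X : Type u} [TopologicalSpace X] [CompactSpace X] [T2Space X]
    (μ τ : Cardinal.{u}) (hμ : ℵ₀ ≤ μ)
    (f : APow μ τ → X) (hf : Continuous f) (hsurj : Surjective f) :
    ∃ g : APow μ (tweight X) → X, Continuous g ∧ Surjective g := by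
  have : Nonempty X := ⟨f fun _ => OnePoint.infty⟩
  rcases lt_or_ge (tweight X) ℵ₀ with hfin | hinf
  · have := finite_of_tweight_lt_aleph0 hfin
    exact exists_continuous_surjective_APow_of_finite ((lt_aleph0_of_finite X).le.trans hμ)
      (tweight_ne_zero X)
  · obtain ⟨B, hB, hBX⟩ := exists_isTopologicalBasis_mk_eq_tweight X
    obtain ⟨J, hJB, hJ⟩ := hf.exists_dependsOn_mk_le hB
    obtain ⟨e⟩ : Nonempty (J ↪ (tweight X).out) := by
      rwa [← le_def, mk_out, ← max_eq_left hinf, ← hBX]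
    obtain ⟨g, hg, hgs⟩ := hJ.exists_continuous_surjective hf hsurj
    exact ⟨g ∘ (· ∘ e), hg.comp (Pi.continuous_precomp e),
      hgs.comp e.injective.surjective_comp_right⟩
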